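/- arXiv:1109.2696 — 3 statements merged into one kernel-verified Lean document; each statement's English description precedes it below -/
import Mathlib

section
/- If w and t are two vertices each joined to the same edge uv by an elementary cycle (through uv), then there is a simple path from w to t passing through the edge uv whose cost is at most the sum of the costs of the two cycles. -/
/-!
Removing `uv` from the cycle through `w` leaves a path from `v` to `u` through `w`. Walking
from `w` along it towards `v`, and towards `u`, we hit the cycle through `t` at vertices `z₁`
and `z₂`; the two halves share only `w ≠ t`, so one of these, call it `z`, differs from `t`.
Of the two arcs of the second cycle between `z` and `t`, one contains `uv`; appending it to the
segment from `w` to `z` gives a path, since the segment meets the second cycle only at `z`.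
Each piece uses distinct edges of one of the two cycles, which bounds the cost.
-/

/-- The cost of a walk: sum of the weights of its edges. -/
def wcost {V : Type*} {G : SimpleGraph V} {x y : V} (ω : Sym2 V → ℝ) (p : G.Walk x y) : ℝ :=
  (p.edges.map ω).sum

section

open SimpleGraph Walk

variable {V : Type*} {G : SimpleGraph V}

theorem wcost_append (ω : Sym2 V → ℝ) {a b c : V} (p : G.Walk a b) (q : G.Walk b c) :
    wcost ω (p.append q) = wcost ω p + wcost ω q := by
  simp [wcost]

theorem wcost_le_of_edges_subset {ω : Sym2 V → ℝ} (hω : ∀ e ∈ G.edgeSet, 0 ≤ ω e)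
    {a b c d : V} {p : G.Walk a b} {q : G.Walk c d} (hp : p.IsTrail) (h : p.edges ⊆ q.edges) :
    wcost ω p ≤ wcost ω q := by
  obtain ⟨l, hl, hlq⟩ := hp.edges_nodup.subperm h
  rw [wcost, ← (hl.map ω).sum_eq]
  refine (hlq.map ω).sum_le_sum ?_
  simpa using fun e he => hω e (q.edges_subset_edgeSet he)

end

namespace SimpleGraph.Walk

variable {V : Type*} {G : SimpleGraph V}

theorem IsPath.append_of_support_inter {a b c : V} {p : G.Walk a b} {q : G.Walk b c}
    (hp : p.IsPath) (hq : q.IsPath) (h : ∀ x ∈ p.support, x ∈ q.support → x = b) :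
    (p.append q).IsPath := by
  have hq' := hq.support_nodup
  rw [← cons_tail_support, List.nodup_cons] at hq'
  rw [isPath_def, support_append, List.nodup_append]
  refine ⟨hp.support_nodup, hq'.2, fun x hx y hy hxy => hq'.1 ?_⟩
  subst hxy
  simpa [h x hx (List.mem_of_mem_tail hy)] using hy

theorem exists_eq_append_first_mem (S : Set V) {a b : V} (P : G.Walk a b) (hb : b ∈ S) :
    ∃ z ∈ S, ∃ (α : G.Walk a z) (β : G.Walk z b), P = α.append β ∧
      ∀ x ∈ α.support, x ∈ S → x = z := by
  induction P with
  | nil => exact ⟨_, hb, nil, nil, rfl, by simp⟩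
  | @cons a c b h P ih =>
    by_cases ha : a ∈ S
    · exact ⟨a, ha, nil, cons h P, rfl, by simp⟩
    · obtain ⟨z, hz, α, β, rfl, hα⟩ := ih hb
      refine ⟨z, hz, cons h α, β, rfl, ?_⟩
      intro x hx hxS
      rw [support_cons, List.mem_cons] at hx
      rcases hx with rfl | hx
      · exact absurd hxS ha
      · exact hα x hx hxS

theorem IsCycle.exists_isPath_of_mem_edges {x u v : V} {c : G.Walk x x} (hc : c.IsCycle)
    (he : s(u, v) ∈ c.edges) :
    ∃ p : G.Walk v u, p.IsPath ∧ x ∈ p.support ∧ p.edges ⊆ c.edges := by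
  classical
  have hu := c.fst_mem_support_of_mem_edges he
  set c' := c.rotate u hu
  have hc' : c'.IsCycle := hc.rotate hu
  have hc'c : c'.edges ⊆ c.edges := (c.rotate_edges u hu).perm.subset
  have hxc' : x ∈ c'.support := (c.mem_support_rotate_iff u hu).mpr c.start_mem_support
  have of_snd : ∀ d : G.Walk u u, d.IsCycle → d.snd = v → x ∈ d.support →
      ∃ p : G.Walk v u, p.IsPath ∧ x ∈ p.support ∧ p.edges ⊆ d.edges := by
    rintro d hd rfl hx
    refine ⟨d.tail, hd.isPath_tail, ?_, by simp [edges_tail, List.tail_subset]⟩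
    rw [← cons_support_tail hd.not_nil, List.mem_cons] at hx
    rcases hx with rfl | hx
    · exact d.tail.end_mem_support
    · exact hx
  have hv : v ∈ c'.toSubgraph.neighborSet u := c'.toSubgraph.mem_edgeSet.mp <|
    c'.mem_edges_toSubgraph.mpr <| (c.rotate_edges u hu).perm.mem_iff.mpr he
  rw [hc'.neighborSet_toSubgraph_endpoint] at hv
  rcases hv with hv | hv
  · obtain ⟨p, hp, hxp, hpc'⟩ := of_snd c' hc' hv.symm hxc'
    exact ⟨p, hp, hxp, List.Subset.trans hpc' hc'c⟩
  · obtain ⟨p, hp, hxp, hpc'⟩ := of_snd c'.reverse hc'.reverse (by rw [snd_reverse, hv])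
      (by simpa using hxc')
    exact ⟨p, hp, hxp, List.Subset.trans hpc' (by simpa using hc'c)⟩

theorem IsCycle.exists_isPath_through_edge {t u v z : V} {c : G.Walk t t} (hc : c.IsCycle)
    (he : s(u, v) ∈ c.edges) (hz : z ∈ c.support) (hzt : z ≠ t) :
    ∃ r : G.Walk z t, r.IsPath ∧ s(u, v) ∈ r.edges ∧ r.support ⊆ c.support ∧
      r.edges ⊆ c.edges := by
  classical
  have hsplit := c.take_spec hz
  have hA : (c.takeUntil z hz).IsPath := hc.isPath_takeUntil hz
  have hB : (c.dropUntil z hz).IsPath :=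
    (hsplit ▸ hc).isPath_of_append_right (not_nil_of_ne hzt.symm)
  rw [← hsplit, edges_append, List.mem_append] at he
  rcases he with he | he
  · refine ⟨(c.takeUntil z hz).reverse, hA.reverse, by simpa using he, ?_, ?_⟩
    · simpa using c.support_takeUntil_subset_support hz
    · simpa using c.edges_takeUntil_subset_edges hz
  · exact ⟨c.dropUntil z hz, hB, he, c.support_dropUntil_subset_support hz,
      c.edges_dropUntil_subset_edges hz⟩

theorem IsCycle.exists_isPath_to_set_avoiding {w u v t : V} {c : G.Walk w w} (hc : c.IsCycle)
    (he : s(u, v) ∈ c.edges) {S : Set V} (hu : u ∈ S) (hv : v ∈ S) (hwt : w ≠ t) :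
    ∃ z ∈ S, z ≠ t ∧ ∃ α : G.Walk w z, α.IsPath ∧ α.edges ⊆ c.edges ∧
      ∀ x ∈ α.support, x ∈ S → x = z := by
  obtain ⟨p, hp, hwp, hpc⟩ := hc.exists_isPath_of_mem_edges he
  obtain ⟨q, r, hq, hr, rfl⟩ := hp.mem_support_iff_exists_append.mp hwp
  have halves : ∀ x ∈ q.support, x ∈ r.support → x = w :=
    fun x hx hx' => by_contra fun hxw => hp.ne_of_mem_support_of_append hxw hx hx' rfl
  rw [edges_append, List.append_subset] at hpc
  obtain ⟨z₁, hz₁, α₁, β₁, h₁, hα₁⟩ := q.reverse.exists_eq_append_first_mem S hv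
  obtain ⟨z₂, hz₂, α₂, β₂, h₂, hα₂⟩ := r.exists_eq_append_first_mem S hu
  have hsub₁ := isSubwalk_of_append_left h₁
  have hsub₂ := isSubwalk_of_append_left h₂
  by_cases hz₁t : z₁ = t
  · subst hz₁t
    refine ⟨z₂, hz₂, fun hz₂t => hwt (halves z₁ ?_ ?_).symm, α₂,
      isPath_of_isSubwalk hsub₂ hr, List.Subset.trans hsub₂.edges_subset hpc.2, hα₂⟩
    · simpa using hsub₁.support_subset α₁.end_mem_support
    · exact hz₂t ▸ hsub₂.support_subset α₂.end_mem_support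
  · refine ⟨z₁, hz₁, hz₁t, α₁, isPath_of_isSubwalk hsub₁ hq.reverse, ?_, hα₁⟩
    exact fun e he => hpc.1 (by simpa using hsub₁.edges_subset he)

end SimpleGraph.Walk

theorem simple_path_through_edge_general {V : Type*} (G : SimpleGraph V)
    (ω : Sym2 V → ℝ) (hω : ∀ e ∈ G.edgeSet, 0 < ω e)
    (u v w t : V) (hwt : w ≠ t)
    (cw : G.Walk w w) (hcw : cw.IsCycle) (hcwe : s(u, v) ∈ cw.edges)
    (ct : G.Walk t t) (hct : ct.IsCycle) (hcte : s(u, v) ∈ ct.edges) :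
    ∃ p : G.Walk w t, p.IsPath ∧ s(u, v) ∈ p.edges ∧
      wcost ω p ≤ wcost ω cw + wcost ω ct := by
  have hω₀ : ∀ e ∈ G.edgeSet, 0 ≤ ω e := fun e he => (hω e he).le
  obtain ⟨z, hzS, hzt, α, hα, hαcw, hαct⟩ := hcw.exists_isPath_to_set_avoiding hcwe
    (S := {x | x ∈ ct.support}) (ct.fst_mem_support_of_mem_edges hcte)
    (ct.snd_mem_support_of_mem_edges hcte) hwt
  obtain ⟨r, hr, hre, hrct, hrct'⟩ := hct.exists_isPath_through_edge hcte hzS hzt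
  refine ⟨α.append r, hα.append_of_support_inter hr fun x hxα hxr => hαct x hxα (hrct hxr),
    by simp [hre], ?_⟩
  rw [wcost_append]
  exact add_le_add (wcost_le_of_edges_subset hω₀ hα.isTrail hαcw)
    (wcost_le_of_edges_subset hω₀ hr.isTrail hrct')

/-- If `w` and `t` are each joined to the edge `uv` by an elementary
cycle through `uv`, then there is a simple `w`-`t` path passing through the edge `uv`
of cost at most the sum of the costs of the two cycles. -/
theorem simple_path_through_edge {V : Type*} [Fintype V] (G : SimpleGraph V)
    (ω : Sym2 V → ℝ) (hω : ∀ e ∈ G.edgeSet, 0 < ω e)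
    (u v w t : V) (huv : G.Adj u v) (hwt : w ≠ t)
    (cw : G.Walk w w) (hcw : cw.IsCycle) (hcwe : s(u, v) ∈ cw.edges)
    (ct : G.Walk t t) (hct : ct.IsCycle) (hcte : s(u, v) ∈ ct.edges) :
    ∃ p : G.Walk w t, p.IsPath ∧ s(u, v) ∈ p.edges ∧
      wcost ω p ≤ wcost ω cw + wcost ω ct :=
  simple_path_through_edge_general G ω hω u v w t hwt cw hcw hcwe ct hct hcte
end

section
/- Let H be a subgraph of weighted graph G such that for every set F of at most p−1 vertices and every edge uv of G with u,v ∉ F, there is a u-v path in H∖F with at most s edges and cost at most s·ω(uv). Then for every edge uv of G not in H, H contains a union of p internally vertex-disjoint u-v paths of total cost at most s·p·r(s,p)·ω(uv), where r(s,p) is the least integer r such that any graph in which no set of fewer than p vertices destroys all u-v paths of at most s edges contains p internally vertex-disjoint u-v paths each with at most r edges. -/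
/-- Two walks with the same endpoints are internally vertex-disjoint if they share no
vertices besides the endpoints. -/
def InternallyDisjoint {V : Type*} {G : SimpleGraph V} {x y : V}
    (p q : G.Walk x y) : Prop :=
  ∀ z ∈ p.support, z ∈ q.support → z = x ∨ z = y

/-- A family of `p` pairwise internally vertex-disjoint paths (a `p`-multipath). -/
def IsMultipath {V : Type*} {G : SimpleGraph V} {x y : V} {p : ℕ}
    (P : Fin p → G.Walk x y) : Prop :=
  (∀ i, (P i).IsPath) ∧ ∀ i j, i ≠ j → InternallyDisjoint (P i) (P j)

/-!
Let `c = s·ω(uv)` and let `L ⊆ H` keep only the edges of weight at most `c`. A walk of cost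
at most `c` with nonnegative weights uses only edges of weight at most `c`, so the fault
tolerant paths of `H` already lie in `L`: no set of fewer than `p` vertices destroys all
`u`-`v` paths of at most `s` edges in `L`, and `uv ∉ L`. Hence `L` contains a `p`-multipath
whose paths have at most `r` edges, each of weight at most `c`, for a total cost of at most
`p·r·c`.
-/

open SimpleGraph

section

variable {V : Type*} {G G' : SimpleGraph V} {x y : V} {ω : Sym2 V → ℝ} {c : ℝ}

lemma wcost_mapLe (h : G ≤ G') (w : G.Walk x y) : wcost ω (w.mapLe h) = wcost ω w := by
  rw [wcost, wcost, Walk.edges_mapLe_eq_edges]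

lemma weight_le_wcost {w : G.Walk x y} (hω : ∀ e ∈ w.edges, 0 ≤ ω e) {e : Sym2 V}
    (he : e ∈ w.edges) : ω e ≤ wcost ω w := by
  refine List.single_le_sum (fun a ha => ?_) _ (List.mem_map_of_mem he)
  obtain ⟨e', he', rfl⟩ := List.mem_map.1 ha
  exact hω e' he'

lemma wcost_le_length_mul {w : G.Walk x y} (hc : ∀ e ∈ w.edges, ω e ≤ c) :
    wcost ω w ≤ w.length * c := by
  have hmap : ∀ a ∈ w.edges.map ω, a ≤ c := by
    simpa only [List.forall_mem_map] using hc
  simpa only [wcost, List.length_map, Walk.length_edges, nsmul_eq_mul] using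
    List.sum_le_card_nsmul _ _ hmap

lemma edges_subset_deleteEdges_of_wcost_le {w : G.Walk x y} (hω : ∀ e ∈ w.edges, 0 ≤ ω e)
    (hw : wcost ω w ≤ c) : ∀ e ∈ w.edges, e ∈ (G.deleteEdges {e | c < ω e}).edgeSet := by
  intro e he
  rw [edgeSet_deleteEdges]
  exact ⟨w.edges_subset_edgeSet he, not_lt.2 ((weight_le_wcost hω he).trans hw)⟩

lemma weight_le_of_mem_edges_deleteEdges {w : (G.deleteEdges {e | c < ω e}).Walk x y}
    {e : Sym2 V} (he : e ∈ w.edges) : ω e ≤ c := by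
  have := w.edges_subset_edgeSet he
  rw [edgeSet_deleteEdges] at this
  exact not_lt.1 this.2

lemma IsMultipath.mapLe {p : ℕ} {Q : Fin p → G.Walk x y} (hQ : IsMultipath Q) (h : G ≤ G') :
    IsMultipath fun i => (Q i).mapLe h := by
  refine ⟨fun i => (Walk.isPath_mapLe h).2 (hQ.1 i), fun i j hij => ?_⟩
  simpa only [InternallyDisjoint, Walk.support_mapLe_eq_support] using hQ.2 i j hij

end

theorem fault_tolerant_multipath_general {V : Type*}
    (G H : SimpleGraph V) (hH : H ≤ G) (ω : Sym2 V → ℝ)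
    (hω : ∀ e ∈ G.edgeSet, 0 < ω e) (s p r : ℕ)
    (hfault : ∀ F : Finset V, F.card ≤ p - 1 → ∀ u v : V, G.Adj u v → u ∉ F → v ∉ F →
      ∃ w : H.Walk u v, w.length ≤ s ∧ (∀ x ∈ w.support, x ∉ F) ∧
        wcost ω w ≤ (s : ℝ) * ω s(u, v))
    (hr : ∀ (P : SimpleGraph V) (a b : V), a ≠ b → ¬P.Adj a b →
      (∀ S : Finset V, S.card ≤ p - 1 → a ∉ S → b ∉ S →
        ∃ w : P.Walk a b, w.length ≤ s ∧ ∀ x ∈ w.support, x ∉ S) →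
      ∃ Q : Fin p → P.Walk a b, IsMultipath Q ∧ ∀ i, (Q i).length ≤ r)
    (u v : V) (huv : G.Adj u v) (hnH : ¬H.Adj u v) :
    ∃ Q : Fin p → H.Walk u v, IsMultipath Q ∧
      ∑ i, wcost ω (Q i) ≤ (s : ℝ) * p * r * ω s(u, v) := by
  set c : ℝ := s * ω s(u, v)
  have hc : 0 ≤ c := by have := hω _ (G.mem_edgeSet.2 huv); positivity
  set L := H.deleteEdges {e | c < ω e}
  have hL : L ≤ H := deleteEdges_le _
  have hcond : ∀ S : Finset V, S.card ≤ p - 1 → u ∉ S → v ∉ S →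
      ∃ w : L.Walk u v, w.length ≤ s ∧ ∀ x ∈ w.support, x ∉ S := by
    intro S hS hu hv
    obtain ⟨w, hlen, hsupp, hcost⟩ := hfault S hS u v huv hu hv
    have hnonneg : ∀ e ∈ w.edges, 0 ≤ ω e :=
      fun e he => (hω e (edgeSet_mono hH (w.edges_subset_edgeSet he))).le
    refine ⟨w.transfer L (edges_subset_deleteEdges_of_wcost_le hnonneg hcost), ?_, ?_⟩
    · rwa [Walk.length_transfer]
    · rwa [Walk.support_transfer]
  obtain ⟨Q, hQ, hQr⟩ := hr L u v huv.ne (fun h => hnH h.1) hcond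
  refine ⟨fun i => (Q i).mapLe hL, hQ.mapLe hL, ?_⟩
  calc ∑ i, wcost ω ((Q i).mapLe hL)
      ≤ ∑ _i : Fin p, (r : ℝ) * c := Finset.sum_le_sum fun i _ => by
        rw [wcost_mapLe]
        refine (wcost_le_length_mul fun e => weight_le_of_mem_edges_deleteEdges).trans ?_
        gcongr
        exact_mod_cast hQr i
    _ = (s : ℝ) * p * r * ω s(u, v) := by
        simp only [Finset.sum_const, Finset.card_univ, Fintype.card_fin, nsmul_eq_mul, c]
        ring

/-- Lemma 1 of the paper. Let `H ⊆ G` be an `s`-hop `(p-1)`-fault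
tolerant spanner: for every fault set `F` of at most `p-1` vertices and every edge `uv`
of `G` avoiding `F`, `H ∖ F` contains a `u`-`v` path of at most `s` edges and cost at most
`s·ω(uv)`. Let `r` be such that any graph in which no set of fewer than `p` vertices
destroys all `u`-`v` paths of at most `s` edges contains a `p`-multipath whose paths have
at most `r` edges each. Then for every edge `uv` of `G` not in `H`, `H` contains a
`p`-multipath between `u` and `v` of total cost at most `s·p·r·ω(uv)`. -/
theorem fault_tolerant_multipath {V : Type*} [Fintype V] [DecidableEq V]
    (G H : SimpleGraph V) (hH : H ≤ G) (ω : Sym2 V → ℝ)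
    (hω : ∀ e ∈ G.edgeSet, 0 < ω e) (s p r : ℕ) (hs : 1 ≤ s) (hp : 1 ≤ p)
    (hfault : ∀ F : Finset V, F.card ≤ p - 1 → ∀ u v : V, G.Adj u v → u ∉ F → v ∉ F →
      ∃ w : H.Walk u v, w.length ≤ s ∧ (∀ x ∈ w.support, x ∉ F) ∧
        wcost ω w ≤ (s : ℝ) * ω s(u, v))
    (hr : ∀ (P : SimpleGraph V) (a b : V), a ≠ b → ¬P.Adj a b →
      (∀ S : Finset V, S.card ≤ p - 1 → a ∉ S → b ∉ S →
        ∃ w : P.Walk a b, w.length ≤ s ∧ ∀ x ∈ w.support, x ∉ S) →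
      ∃ Q : Fin p → P.Walk a b, IsMultipath Q ∧ ∀ i, (Q i).length ≤ r)
    (u v : V) (huv : G.Adj u v) (hnH : ¬H.Adj u v) :
    ∃ Q : Fin p → H.Walk u v, IsMultipath Q ∧
      ∑ i, wcost ω (Q i) ≤ (s : ℝ) * p * r * ω s(u, v) :=
  fault_tolerant_multipath_general G H hH ω hω s p r hfault hr u v huv hnH
end

section
/- Let u,v be non-adjacent vertices in a finite graph and let s equal the minimum number of edges of any u-v path (the hop-distance). Then κ_s(u,v) = μ_s(u,v): the minimum number of vertices whose deletion destroys all u-v paths of at most s edges equals the maximum number of internally vertex-disjoint u-v paths with at most s edges each. -/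
namespace Menger

variable {V : Type*}

/-- Vertices may repeat: walks serve as well as paths for separators and disjointness. -/
structure IsWalk (D : Finset (V × V)) (A B : Finset V) (l : List V) : Prop where
  ne_nil : l ≠ []
  isChain : l.IsChain fun a b => (a, b) ∈ D
  head_mem : ∀ a ∈ l.head?, a ∈ A
  getLast_mem : ∀ b ∈ l.getLast?, b ∈ B

def Separates (D : Finset (V × V)) (A B S : Finset V) : Prop :=
  ∀ l, IsWalk D A B l → ∃ z ∈ l, z ∈ S

def HasDisjointWalks (D : Finset (V × V)) (A B : Finset V) (k : ℕ) : Prop :=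
  ∃ W : Fin k → List V, (∀ i, IsWalk D A B (W i)) ∧ Pairwise fun i j => (W i).Disjoint (W j)

variable {D D' : Finset (V × V)} {A B X Y S T : Finset V} {l l₁ l₂ : List V} {k : ℕ}

lemma IsWalk.mono (h : IsWalk D A B l) (hD : D ⊆ D') : IsWalk D' A B l :=
  ⟨h.ne_nil, h.isChain.imp fun _ _ hab => hD hab, h.head_mem, h.getLast_mem⟩

lemma IsWalk.append (h₁ : IsWalk D A X l₁) (h₂ : IsWalk D Y B l₂)
    (h : ∀ a ∈ l₁.getLast?, ∀ b ∈ l₂.head?, (a, b) ∈ D) :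
    IsWalk D A B (l₁ ++ l₂) where
  ne_nil := by simp [h₁.ne_nil]
  isChain := h₁.isChain.append h₂.isChain h
  head_mem := by simpa [List.head?_append_of_ne_nil _ h₁.ne_nil] using h₁.head_mem
  getLast_mem := by simpa [List.getLast?_append_of_ne_nil _ h₂.ne_nil] using h₂.getLast_mem

lemma IsWalk.splice {α β γ δ : List V} {z : V} (h₁ : IsWalk D A X (α ++ z :: β))
    (h₂ : IsWalk D Y B (γ ++ z :: δ)) : IsWalk D A B (α ++ z :: δ) where
  ne_nil := by simp
  isChain := by
    simpa using (h₁.isChain.prefix (l₁ := α ++ [z]) ⟨β, by simp⟩).append_overlap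
      (h₂.isChain.suffix ⟨γ, rfl⟩ : (z :: δ).IsChain _) (List.cons_ne_nil z [])
  head_mem := by simpa [List.head?_append] using h₁.head_mem
  getLast_mem := by simpa [List.getLast?_append_cons] using h₂.getLast_mem

lemma IsWalk.exists_prefix (h : IsWalk D A B l) (hX : ∃ z ∈ l, z ∈ X) :
    ∃ p c, p ++ [c] <+: l ∧ IsWalk D A X (p ++ [c]) ∧ ∀ z ∈ p, z ∉ X := by
  classical
  obtain ⟨c, hc⟩ := Option.isSome_iff_exists.1
    (List.find?_isSome (p := fun z => decide (z ∈ X)).2 (by simpa using hX))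
  obtain ⟨hcX, p, q, rfl, hp⟩ := List.find?_eq_some_iff_append.1 hc
  refine ⟨p, c, ⟨q, by simp⟩, ⟨by simp, h.isChain.prefix ⟨q, by simp⟩, ?_, ?_⟩,
    by simpa using hp⟩
  · simpa [List.head?_append] using h.head_mem
  · simpa using hcX

lemma IsWalk.exists_suffix (h : IsWalk D A B l) (hY : ∃ z ∈ l, z ∈ Y) :
    ∃ c q, c :: q <:+ l ∧ IsWalk D Y B (c :: q) ∧ ∀ z ∈ q, z ∉ Y := by
  classical
  obtain ⟨c, hc⟩ := Option.isSome_iff_exists.1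
    (List.find?_isSome (p := fun z => decide (z ∈ Y)) (xs := l.reverse) |>.2 (by simpa using hY))
  obtain ⟨hcY, p, q, hl, hp⟩ := List.find?_eq_some_iff_append.1 hc
  rw [List.reverse_eq_iff] at hl
  subst hl
  refine ⟨c, p.reverse, ⟨q.reverse, by simp⟩,
    ⟨by simp, h.isChain.suffix ⟨q.reverse, by simp⟩, ?_, ?_⟩, by simpa using hp⟩
  · simpa using hcY
  · simpa [List.getLast?_append_cons] using h.getLast_mem

lemma HasDisjointWalks.exists_prefixes (h : HasDisjointWalks D A X k) :
    ∃ (p : Fin k → List V) (c : Fin k → V), (∀ i, IsWalk D A X (p i ++ [c i])) ∧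
      (∀ i, ∀ z ∈ p i, z ∉ X) ∧
      Pairwise fun i j => (p i ++ [c i]).Disjoint (p j ++ [c j]) := by
  obtain ⟨W, hW, hdisj⟩ := h
  have hX : ∀ i, ∃ z ∈ W i, z ∈ X := fun i => ⟨_, List.getLast_mem (hW i).ne_nil,
    (hW i).getLast_mem _ (List.getLast?_eq_some_getLast (hW i).ne_nil)⟩
  choose p c hpre hpc hp using fun i => (hW i).exists_prefix (hX i)
  exact ⟨p, c, hpc, hp, fun i j hij => List.disjoint_of_subset_left (hpre i).subset
    (List.disjoint_of_subset_right (hpre j).subset (hdisj hij))⟩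

lemma HasDisjointWalks.exists_suffixes (h : HasDisjointWalks D Y B k) :
    ∃ (d : Fin k → V) (q : Fin k → List V), (∀ i, IsWalk D Y B (d i :: q i)) ∧
      (∀ i, ∀ z ∈ q i, z ∉ Y) ∧
      Pairwise fun i j => (d i :: q i).Disjoint (d j :: q j) := by
  obtain ⟨W, hW, hdisj⟩ := h
  have hY : ∀ i, ∃ z ∈ W i, z ∈ Y := fun i => ⟨_, List.head_mem (hW i).ne_nil,
    (hW i).head_mem _ (List.head?_eq_some_head (hW i).ne_nil)⟩
  choose d q hsuf hdq hq using fun i => (hW i).exists_suffix (hY i)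
  exact ⟨d, q, hdq, hq, fun i j hij => List.disjoint_of_subset_left (hsuf i).subset
    (List.disjoint_of_subset_right (hsuf j).subset (hdisj hij))⟩

/-- Otherwise following `p ++ [c]` up to `z` and then `d :: q` from `z` on would avoid `S`. -/
lemma Separates.mem_of_mem_of_mem (hS : Separates D A B S) {p q : List V} {c d z : V}
    (hP : IsWalk D A X (p ++ [c])) (hQ : IsWalk D Y B (d :: q)) (hp : ∀ w ∈ p, w ∉ S)
    (hq : ∀ w ∈ q, w ∉ S) (hzP : z ∈ p ++ [c]) (hzQ : z ∈ d :: q) : z ∈ S := by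
  obtain ⟨α, β, hαβ⟩ := List.append_of_mem hzP
  obtain ⟨γ, δ, hγδ⟩ := List.append_of_mem hzQ
  have hα : α ⊆ p := by
    have := congrArg List.dropLast hαβ
    rw [List.dropLast_concat, List.dropLast_append_of_ne_nil (List.cons_ne_nil _ _)] at this
    exact this ▸ List.subset_append_left _ _
  have hδ : δ ⊆ q := by
    have := congrArg List.tail hγδ
    rw [List.tail_cons] at this
    rw [this]
    cases γ <;> simp
  obtain ⟨w, hw, hwS⟩ := hS _ ((hαβ ▸ hP).splice (hγδ ▸ hQ))
  rcases List.mem_append.1 hw with hw | hw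
  · exact absurd hwS (hp w (hα hw))
  · rcases List.mem_cons.1 hw with rfl | hw
    · exact hwS
    · exact absurd hwS (hq w (hδ hw))

lemma hasDisjointWalks_empty (hk : ∀ S, Separates ∅ A B S → k ≤ S.card) :
    HasDisjointWalks ∅ A B k := by
  classical
  have hsep : Separates ∅ A B (A ∩ B) := fun
    | [], hl => absurd rfl hl.ne_nil
    | [a], hl => ⟨a, by simp, Finset.mem_inter.2 ⟨hl.head_mem a rfl, hl.getLast_mem a rfl⟩⟩
    | _ :: _ :: _, hl => by simpa using hl.isChain
  obtain ⟨f⟩ := Function.Embedding.nonempty_of_card_le (α := Fin k) (β := ↥(A ∩ B))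
    (by simpa using hk _ hsep)
  refine ⟨fun i => [(f i : V)], fun i => ?_, fun i j hij => ?_⟩
  · have hf := Finset.mem_inter.1 (f i).2
    exact ⟨by simp, .singleton _, by simpa using hf.1, by simpa using hf.2⟩
  · simpa [Subtype.val_inj] using f.injective.ne hij.symm

variable [DecidableEq V] {x y : V}

lemma isChain_of_notMem_dropLast :
    ∀ {l : List V}, l.IsChain (fun a b => (a, b) ∈ insert (x, y) D) → x ∉ l.dropLast →
      l.IsChain fun a b => (a, b) ∈ D
  | [], _, _ => .nil
  | [_], _, _ => .singleton _
  | a :: b :: t, h, hx => by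
    rw [List.isChain_cons_cons] at h
    have hxa : a ≠ x := fun hax => hx (by simp [hax])
    refine .cons_cons ?_ (isChain_of_notMem_dropLast h.2 fun hx' => hx (by simp_all))
    simpa [hxa] using h.1

lemma isChain_of_notMem_tail :
    ∀ {l : List V}, l.IsChain (fun a b => (a, b) ∈ insert (x, y) D) → y ∉ l.tail →
      l.IsChain fun a b => (a, b) ∈ D
  | [], _, _ => .nil
  | [_], _, _ => .singleton _
  | a :: b :: t, h, hy => by
    rw [List.isChain_cons_cons] at h
    have hyb : b ≠ y := fun hby => hy (by simp [hby])
    refine .cons_cons ?_ (isChain_of_notMem_tail h.2 fun hy' => hy (List.mem_of_mem_tail hy'))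
    simpa [hyb] using h.1

lemma Separates.insert_left (hS : Separates D A B S) :
    Separates (insert (x, y) D) A B (insert x S) := by
  intro l hl
  by_cases hx : x ∈ l
  · exact ⟨x, hx, Finset.mem_insert_self x S⟩
  · obtain ⟨z, hz, hzS⟩ := hS l ⟨hl.ne_nil, isChain_of_notMem_dropLast hl.isChain
      fun h => hx (List.dropLast_subset l h), hl.head_mem, hl.getLast_mem⟩
    exact ⟨z, hz, Finset.mem_insert_of_mem hzS⟩

lemma Separates.insert_right (hS : Separates D A B S) :
    Separates (insert (x, y) D) A B (insert y S) := by
  intro l hl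
  by_cases hy : y ∈ l
  · exact ⟨y, hy, Finset.mem_insert_self y S⟩
  · obtain ⟨z, hz, hzS⟩ := hS l ⟨hl.ne_nil, isChain_of_notMem_tail hl.isChain
      fun h => hy (List.mem_of_mem_tail h), hl.head_mem, hl.getLast_mem⟩
    exact ⟨z, hz, Finset.mem_insert_of_mem hzS⟩

/-- Every walk is cut at its first vertex in `S + x`; before that point it cannot use `xy`. -/
lemma Separates.insert_of_left (hS : Separates D A B S) (hT : Separates D A (insert x S) T) :
    Separates (insert (x, y) D) A B T := by
  intro l hl
  obtain ⟨p, c, hpre, hpc, hp⟩ := hl.exists_prefix (hS.insert_left l hl)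
  have hx : x ∉ (p ++ [c]).dropLast := by
    simpa using fun h => hp x h (Finset.mem_insert_self x S)
  obtain ⟨z, hz, hzT⟩ := hT _ ⟨hpc.ne_nil, isChain_of_notMem_dropLast hpc.isChain hx,
    hpc.head_mem, hpc.getLast_mem⟩
  exact ⟨z, hpre.subset hz, hzT⟩

lemma Separates.insert_of_right (hS : Separates D A B S) (hT : Separates D (insert y S) B T) :
    Separates (insert (x, y) D) A B T := by
  intro l hl
  obtain ⟨c, q, hsuf, hcq, hq⟩ := hl.exists_suffix (hS.insert_right l hl)
  have hy : y ∉ (c :: q).tail := fun h => hq y h (Finset.mem_insert_self y S)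
  obtain ⟨z, hz, hzT⟩ := hT _ ⟨hcq.ne_nil, isChain_of_notMem_tail hcq.isChain hy,
    hcq.head_mem, hcq.getLast_mem⟩
  exact ⟨z, hsuf.subset hz, hzT⟩

lemma exists_isWalk_insert_of_glue {p q : List V} {c d : V} (hP : IsWalk D A X (p ++ [c]))
    (hQ : IsWalk D Y B (d :: q)) (h : (c = x ∧ d = y) ∨ c = d) :
    ∃ l, IsWalk (insert (x, y) D) A B l ∧ ∀ z ∈ l, z ∈ p ++ [c] ∨ z ∈ d :: q := by
  rcases h with ⟨rfl, rfl⟩ | rfl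
  · exact ⟨_, (hP.mono (Finset.subset_insert _ _)).append (hQ.mono (Finset.subset_insert _ _))
      (by simp), fun z hz => List.mem_append.1 hz⟩
  · refine ⟨p ++ c :: q, (hP.splice (γ := []) hQ).mono (Finset.subset_insert _ _), ?_⟩
    intro z hz
    simp only [List.mem_append, List.mem_cons] at hz ⊢
    tauto

/-- The walk ending at `c i` is to be continued by the walk starting at `c i`, or at `y` if
`c i = x`. -/
lemma exists_injective_matching (hyS : y ∉ S) (hk : S.card + 1 = k) {c d : Fin k → V}
    (hc : Function.Injective c) (hd : Function.Injective d) (hcS : ∀ i, c i ∈ insert x S)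
    (hdS : ∀ j, d j ∈ insert y S) :
    ∃ e : Fin k → Fin k, Function.Injective e ∧
      ∀ i, (c i = x ∧ d (e i) = y) ∨ c i = d (e i) := by
  set σ : V → V := fun z => if z = x then y else z
  have hσ : ∀ i, σ (c i) ∈ insert y S := fun i => by
    by_cases h : c i = x
    · simp [σ, h]
    · simpa [σ, h] using .inr ((Finset.mem_insert.1 (hcS i)).resolve_left h)
  have hσinj : Function.Injective (σ ∘ c) := fun i j hij => hc <| by
    have hi := hcS i
    have hj := hcS j
    by_cases h₁ : c i = x <;> by_cases h₂ : c j = x <;> simp_all [σ]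
  have hdsurj : ∀ t ∈ insert y S, ∃ j, d j = t := fun t ht => by
    obtain ⟨j, -, hj⟩ := Finset.surj_on_of_inj_on_of_card_le (s := Finset.univ) (fun j _ => d j)
      (fun j _ => hdS j) (fun _ _ _ _ h => hd h)
      (by simp [Finset.card_insert_of_notMem hyS, hk]) t ht
    exact ⟨j, hj.symm⟩
  choose e he using fun i => hdsurj _ (hσ i)
  refine ⟨e, fun i j hij => hσinj (by simp only [Function.comp, ← he, hij]), fun i => ?_⟩
  by_cases h : c i = x
  · exact .inl ⟨h, by simp [he, σ, h]⟩
  · exact .inr (by simp [he, σ, h])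

lemma hasDisjointWalks_insert (hS : Separates D A B S) (hyS : y ∉ S) (hk : S.card + 1 = k)
    (hP : HasDisjointWalks D A (insert x S) k) (hQ : HasDisjointWalks D (insert y S) B k) :
    HasDisjointWalks (insert (x, y) D) A B k := by
  obtain ⟨p, c, hP, hp, hPd⟩ := hP.exists_prefixes
  obtain ⟨d, q, hQ, hq, hQd⟩ := hQ.exists_suffixes
  have hc : Function.Injective c := fun i j h => by_contra fun hij =>
    hPd hij (List.mem_concat_self (a := c i)) (h ▸ List.mem_concat_self)
  have hd : Function.Injective d := fun i j h => by_contra fun hij =>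
    hQd hij (List.mem_cons_self (a := d i)) (h ▸ List.mem_cons_self)
  obtain ⟨e, he, hce⟩ := exists_injective_matching hyS hk hc hd
    (fun i => (hP i).getLast_mem _ (by simp)) (fun j => (hQ j).head_mem _ rfl)
  choose W hW hWsub using fun i => exists_isWalk_insert_of_glue (hP i) (hQ (e i)) (hce i)
  have hcross : ∀ i i' z, z ∈ p i ++ [c i] → z ∈ d (e i') :: q (e i') → i = i' := by
    intro i i' z hzP hzQ
    have hzS := hS.mem_of_mem_of_mem (hP i) (hQ (e i'))
      (fun w hw hwS => hp i w hw (Finset.mem_insert_of_mem hwS))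
      (fun w hw hwS => hq _ w hw (Finset.mem_insert_of_mem hwS)) hzP hzQ
    have hzc : z = c i := (by simpa using hzP : z ∈ p i ∨ z = c i).resolve_left
      fun h => hp i z h (Finset.mem_insert_of_mem hzS)
    have hzd : z = d (e i') := (List.mem_cons.1 hzQ).resolve_right
      fun h => hq _ z h (Finset.mem_insert_of_mem hzS)
    rcases hce i' with ⟨-, hy⟩ | h
    · exact absurd (hy ▸ hzd ▸ hzS) hyS
    · exact hc (by rw [h, ← hzd, hzc])
  refine ⟨W, hW, fun i i' hii' z hz hz' => ?_⟩
  rcases hWsub i z hz with h₁ | h₁ <;> rcases hWsub i' z hz' with h₂ | h₂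
  · exact hPd hii' h₁ h₂
  · exact hii' (hcross i i' z h₁ h₂)
  · exact hii' (hcross i' i z h₂ h₁).symm
  · exact hQd (he.ne hii') h₁ h₂

theorem hasDisjointWalks_of_forall_le_card (D : Finset (V × V)) (A B : Finset V) (k : ℕ)
    (hk : ∀ S, Separates D A B S → k ≤ S.card) : HasDisjointWalks D A B k := by
  induction D using Finset.induction_on generalizing A B k with
  | empty => exact hasDisjointWalks_empty hk
  | insert e D _ ih =>
    obtain ⟨x, y⟩ := e
    by_cases hsmall : ∃ S, Separates D A B S ∧ S.card < k
    · obtain ⟨S, hS, hSk⟩ := hsmall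
      have hxk := hk _ hS.insert_left
      have hyk := hk _ hS.insert_right
      have hyS : y ∉ S := fun hy => by rw [Finset.insert_eq_of_mem hy] at hyk; omega
      have hcard : S.card + 1 = k := by have := Finset.card_insert_le x S; omega
      exact hasDisjointWalks_insert hS hyS hcard
        (ih _ _ _ fun T hT => hk T (hS.insert_of_left hT))
        (ih _ _ _ fun T hT => hk T (hS.insert_of_right hT))
    · push Not at hsmall
      obtain ⟨W, hW, hWd⟩ := ih A B k hsmall
      exact ⟨W, fun i => (hW i).mono (Finset.subset_insert _ _), hWd⟩

lemma isWalk_iff_isChain_cons_append [Fintype V] {u v : V} {M : List V} :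
    IsWalk D {a | (u, a) ∈ D} {b | (b, v) ∈ D} M ↔
      M ≠ [] ∧ (u :: (M ++ [v])).IsChain fun a b => (a, b) ∈ D := by
  constructor
  · intro h
    refine ⟨h.ne_nil, (h.isChain.append (.singleton v) ?_).cons ?_⟩
    · simpa using h.getLast_mem
    · simpa [List.head?_append_of_ne_nil _ h.ne_nil] using h.head_mem
  · rintro ⟨hM, h⟩
    rw [List.isChain_cons, List.isChain_append, List.head?_append_of_ne_nil _ hM] at h
    exact ⟨hM, h.2.1, by simpa using h.1, by simpa using h.2.2.2⟩

end Menger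

lemma List.IsChain.apply_getLast_eq_add_length {α : Type*} (f : α → ℕ) :
    ∀ {a : α} {l : List α}, (a :: l).IsChain (fun x y => f y = f x + 1) →
      f ((a :: l).getLast (List.cons_ne_nil a l)) = f a + l.length
  | _, [], _ => rfl
  | _, _ :: _, h => by
    rw [List.isChain_cons_cons] at h
    rw [List.getLast_cons_cons, apply_getLast_eq_add_length f h.2, h.1, List.length_cons]
    omega

namespace SimpleGraph

variable {V : Type*} {G : SimpleGraph V} {u v a b x : V}

lemma Walk.isPath_and_length_le_dist_iff {w : G.Walk u v} :
    w.IsPath ∧ w.length ≤ G.dist u v ↔ w.length = G.dist u v :=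
  ⟨fun h => le_antisymm h.2 (dist_le w), fun h => ⟨w.isPath_of_length_eq_dist h, h.le⟩⟩

lemma Walk.dist_getVert {w : G.Walk u v} (hw : w.length = G.dist u v) {n : ℕ}
    (hn : n ≤ w.length) : G.dist u (w.getVert n) = n := by
  have htake : (w.take n).length = n := by simp [Walk.take_length, hn]
  obtain ⟨q, hq⟩ := (w.take n).reachable.exists_walk_length_eq_dist
  have hshortcut := dist_le (q.append (w.drop n))
  simp only [Walk.length_append, Walk.drop_length] at hshortcut
  have := dist_le (w.take n)
  omega

lemma Walk.dist_eq_length_of_support_eq {w : G.Walk u v} (hw : w.length = G.dist u v)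
    {l₁ l₂ : List V} (h : w.support = l₁ ++ x :: l₂) : G.dist u x = l₁.length := by
  have hlen := congrArg List.length h
  simp only [Walk.length_support, List.length_append, List.length_cons] at hlen
  have hx : w.getVert l₁.length = x := by
    rw [w.getVert_eq_support_getElem (by omega)]
    simp [h]
  rw [← hx, dist_getVert hw (by omega)]

lemma Walk.exists_support_eq_of_isChain {l : List V} (h : (u :: (l ++ [v])).IsChain G.Adj) :
    ∃ w : G.Walk u v, w.support = u :: (l ++ [v]) := by
  have hlast : (u :: (l ++ [v])).getLast (List.cons_ne_nil _ _) = v := by simp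
  exact ⟨(Walk.ofSupport _ _ h).copy (List.head_cons ..) hlast,
    by rw [Walk.support_copy, Walk.support_ofSupport]⟩

variable [Fintype V]

open Classical in
noncomputable def geodesicArcs (G : SimpleGraph V) (u v : V) : Finset (V × V) :=
  {e | ∃ w : G.Walk u v, w.length = G.dist u v ∧ [e.1, e.2] <:+: w.support}

lemma mem_geodesicArcs : (a, b) ∈ G.geodesicArcs u v ↔
    ∃ w : G.Walk u v, w.length = G.dist u v ∧ [a, b] <:+: w.support := by
  simp [geodesicArcs]

lemma adj_of_mem_geodesicArcs (h : (a, b) ∈ G.geodesicArcs u v) : G.Adj a b := by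
  obtain ⟨w, -, hab⟩ := mem_geodesicArcs.1 h
  exact List.isChain_pair.1 (w.isChain_adj_support.infix hab)

lemma dist_eq_succ_of_mem_geodesicArcs (h : (a, b) ∈ G.geodesicArcs u v) :
    G.dist u b = G.dist u a + 1 := by
  obtain ⟨w, hw, l₁, l₂, hl⟩ := mem_geodesicArcs.1 h
  rw [Walk.dist_eq_length_of_support_eq hw (l₁ := l₁ ++ [a]) (l₂ := l₂) (by simp [← hl]),
    Walk.dist_eq_length_of_support_eq hw (l₁ := l₁) (l₂ := b :: l₂) (by simp [← hl]),
    List.length_append, List.length_singleton]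

lemma Walk.isChain_support_geodesicArcs {w : G.Walk u v} (hw : w.length = G.dist u v) :
    w.support.IsChain fun a b => (a, b) ∈ G.geodesicArcs u v :=
  (List.isChain_isInfix _).imp fun _ _ h => mem_geodesicArcs.2 ⟨w, hw, h⟩

variable [DecidableEq V]

lemma Walk.exists_isWalk_geodesicArcs (w : G.Walk u v) (hw : w.length = G.dist u v)
    (h2 : 2 ≤ G.dist u v) : ∃ M, Menger.IsWalk (G.geodesicArcs u v)
      {a | (u, a) ∈ G.geodesicArcs u v} {b | (b, v) ∈ G.geodesicArcs u v} M ∧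
      w.support = u :: (M ++ [v]) := by
  cases w with
  | nil => simp at h2
  | cons h w' =>
    have hsupp : (cons h w').support = u :: (w'.support.dropLast ++ [v]) := by
      simp [Walk.dropLast_support_concat]
    refine ⟨_, Menger.isWalk_iff_isChain_cons_append.2
      ⟨?_, hsupp ▸ isChain_support_geodesicArcs hw⟩, hsupp⟩
    rw [← List.length_pos_iff, List.length_dropLast, Walk.length_support]
    simp only [Walk.length_cons] at hw
    omega

lemma exists_walk_of_isWalk_geodesicArcs {M : List V} (hM : Menger.IsWalk (G.geodesicArcs u v)
    {a | (u, a) ∈ G.geodesicArcs u v} {b | (b, v) ∈ G.geodesicArcs u v} M) :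
    ∃ w : G.Walk u v, w.length = G.dist u v ∧ w.support = u :: (M ++ [v]) := by
  obtain ⟨-, hchain⟩ := Menger.isWalk_iff_isChain_cons_append.1 hM
  have hlen : G.dist u v = M.length + 1 := by
    simpa using
      (hchain.imp fun _ _ => dist_eq_succ_of_mem_geodesicArcs).apply_getLast_eq_add_length
  obtain ⟨w, hw⟩ := Walk.exists_support_eq_of_isChain
    (hchain.imp fun _ _ => adj_of_mem_geodesicArcs)
  refine ⟨w, ?_, hw⟩
  have := congrArg List.length hw
  simp only [Walk.length_support, List.length_cons, List.length_append, List.length_nil] at this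
  omega

lemma Walk.exists_mem_support_sdiff_of_separates {S : Finset V}
    (hS : Menger.Separates (G.geodesicArcs u v) {a | (u, a) ∈ G.geodesicArcs u v}
      {b | (b, v) ∈ G.geodesicArcs u v} S)
    (w : G.Walk u v) (hw : w.length = G.dist u v) (h2 : 2 ≤ G.dist u v) :
    ∃ z ∈ w.support, z ∈ S \ {u, v} := by
  obtain ⟨M, hM, hsupp⟩ := w.exists_isWalk_geodesicArcs hw h2
  obtain ⟨z, hzM, hzS⟩ := hS M hM
  have hnodup := (w.isPath_of_length_eq_dist hw).support_nodup
  rw [hsupp] at hnodup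
  refine ⟨z, by simp [hsupp, hzM], Finset.mem_sdiff.2 ⟨hzS, ?_⟩⟩
  simp only [List.nodup_cons, List.nodup_append, List.mem_append] at hnodup
  grind

end SimpleGraph

lemma internallyDisjoint_of_support_eq {V : Type*} {G : SimpleGraph V} {u v : V}
    {p q : G.Walk u v} {M N : List V} (hp : p.support = u :: (M ++ [v]))
    (hq : q.support = u :: (N ++ [v])) (h : M.Disjoint N) : InternallyDisjoint p q := by
  intro z hzp hzq
  rw [hp] at hzp
  rw [hq] at hzq
  simp only [List.mem_cons, List.mem_append, List.not_mem_nil, or_false] at hzp hzq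
  grind [List.Disjoint]

lemma card_le_of_internallyDisjoint {V : Type*} {G : SimpleGraph V} {u v : V} {m : ℕ}
    {Q : Fin m → G.Walk u v} (hQ : ∀ i j, i ≠ j → InternallyDisjoint (Q i) (Q j))
    {S : Finset V} (hu : u ∉ S) (hv : v ∉ S) (hS : ∀ i, ∃ x ∈ (Q i).support, x ∈ S) :
    m ≤ S.card := by
  choose z hz hzS using hS
  simpa using Finset.card_le_card_of_injOn (s := Finset.univ) z (fun i _ => hzS i)
    fun i _ j _ hij => by_contra fun hne => (hQ i j hne _ (hz i) (hij ▸ hz j)).elim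
      (fun h => hu (h ▸ hzS i)) fun h => hv (h ▸ hzS i)

theorem kappa_eq_mu_at_hop_distance_general {V : Type*} [Fintype V]
    (G : SimpleGraph V) (u v : V) (huv : u ≠ v) (hna : ¬G.Adj u v) (s : ℕ)
    (hreach : ∃ w : G.Walk u v, w.IsPath ∧ w.length = s)
    (hmin : ∀ w : G.Walk u v, s ≤ w.length) :
    sInf {n : ℕ | ∃ S : Finset V, S.card = n ∧ u ∉ S ∧ v ∉ S ∧
        ∀ w : G.Walk u v, w.IsPath → w.length ≤ s → ∃ x ∈ w.support, x ∈ S}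
      = sSup {m : ℕ | ∃ Q : Fin m → G.Walk u v,
          (∀ i, (Q i).IsPath ∧ (Q i).length ≤ s) ∧
          ∀ i j, i ≠ j → InternallyDisjoint (Q i) (Q j)} := by
  classical
  obtain ⟨w₀, -, rfl⟩ := hreach
  obtain ⟨w₁, hw₁⟩ := w₀.reachable.exists_walk_length_eq_dist
  have hs : w₀.length = G.dist u v := le_antisymm (hw₁ ▸ hmin w₁) (SimpleGraph.dist_le w₀)
  rw [hs]
  have h2 : 2 ≤ G.dist u v := w₀.reachable.one_lt_dist_of_ne_of_not_adj huv hna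
  set K := {n : ℕ | ∃ S : Finset V, S.card = n ∧ u ∉ S ∧ v ∉ S ∧
    ∀ w : G.Walk u v, w.IsPath → w.length ≤ G.dist u v → ∃ x ∈ w.support, x ∈ S}
  have hK : ∀ S, Menger.Separates (G.geodesicArcs u v) {a | (u, a) ∈ G.geodesicArcs u v}
      {b | (b, v) ∈ G.geodesicArcs u v} S → (S \ {u, v}).card ∈ K := fun S hS =>
    ⟨_, rfl, by simp, by simp, fun w hp hl => w.exists_mem_support_sdiff_of_separates hS
      (SimpleGraph.Walk.isPath_and_length_le_dist_iff.1 ⟨hp, hl⟩) h2⟩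
  have hKne : K.Nonempty :=
    ⟨_, hK Finset.univ fun l hl => ⟨_, List.head_mem hl.ne_nil, Finset.mem_univ _⟩⟩
  refine (IsGreatest.csSup_eq ⟨?_, fun m hm => le_csInf hKne ?_⟩).symm
  · obtain ⟨W, hW, hWd⟩ := Menger.hasDisjointWalks_of_forall_le_card _ _ _ (sInf K)
      fun S hS => (Nat.sInf_le (hK S hS)).trans (Finset.card_le_card Finset.sdiff_subset)
    choose Q hQ hQsupp using fun i => SimpleGraph.exists_walk_of_isWalk_geodesicArcs (hW i)
    exact ⟨Q, fun i => SimpleGraph.Walk.isPath_and_length_le_dist_iff.2 (hQ i),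
      fun i j hij => internallyDisjoint_of_support_eq (hQsupp i) (hQsupp j) (hWd hij)⟩
  · obtain ⟨Q, hQ, hQd⟩ := hm
    rintro n ⟨S, rfl, hu, hv, hS⟩
    exact card_le_of_internallyDisjoint hQd hu hv fun i => hS _ (hQ i).1 (hQ i).2

/-- `κ_s = μ_s` when `s` is the hop-distance. Let `u, v` be
non-adjacent and let `s` be the minimum number of edges of a `u`-`v` path. Then the
minimum number of vertices (excluding `u,v`) whose removal destroys all `u`-`v` paths
with at most `s` edges equals the maximum number of internally vertex-disjoint `u`-`v`
paths with at most `s` edges each. -/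
theorem kappa_eq_mu_at_hop_distance {V : Type*} [Fintype V] [DecidableEq V]
    (G : SimpleGraph V) (u v : V) (huv : u ≠ v) (hna : ¬G.Adj u v) (s : ℕ)
    (hreach : ∃ w : G.Walk u v, w.IsPath ∧ w.length = s)
    (hmin : ∀ w : G.Walk u v, s ≤ w.length) :
    sInf {n : ℕ | ∃ S : Finset V, S.card = n ∧ u ∉ S ∧ v ∉ S ∧
        ∀ w : G.Walk u v, w.IsPath → w.length ≤ s → ∃ x ∈ w.support, x ∈ S}
      = sSup {m : ℕ | ∃ Q : Fin m → G.Walk u v,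
          (∀ i, (Q i).IsPath ∧ (Q i).length ≤ s) ∧
          ∀ i j, i ≠ j → InternallyDisjoint (Q i) (Q j)} :=
  kappa_eq_mu_at_hop_distance_general G u v huv hna s hreach hmin
end
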